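/- arXiv:0711.3492 — 2 statements merged into one kernel-verified Lean document; each statement's English description precedes it below -/
import Mathlib

section
/- Let G be a finite abelian group and ψ : G → ℝ with ψ(g) = ψ(-g) for all g. Let Q_{g,h} = ψ(h-g), P = exp(Q), and f(g) = P_{0,g}. Then for every character χ of G, the Fourier transform f̌(χ) = ∑_{h∈G} χ(h) f(h) is a nonnegative real number. -/
/-!
Each character `χ`, viewed as a vector, is an eigenvector of the circulant matrix `Q` with
eigenvalue `∑ k, χ k * ψ k`, which is real because `ψ` is even. Hence `χ` is an eigenvector of
`exp Q` with the positive eigenvalue `exp (∑ k, χ k * ψ k)`, and the Fourier sum of `f` is the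
`0`-th coordinate of `exp Q *ᵥ χ`.
-/

open scoped ComplexOrder
open NormedSpace Matrix

namespace Matrix

variable {n : Type*} [Fintype n] [DecidableEq n]

theorem pow_mulVec_of_mulVec_eq_smul {R : Type*} [CommSemiring R] {A : Matrix n n R}
    {v : n → R} {μ : R} (h : A *ᵥ v = μ • v) (k : ℕ) : A ^ k *ᵥ v = μ ^ k • v := by
  induction k with
  | zero => simp
  | succ k ih => rw [pow_succ', ← mulVec_mulVec, ih, mulVec_smul, h, smul_smul, pow_succ]

section

-- `exp` on matrices does not depend on the norm; one is chosen to use the series lemmas.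
attribute [local instance] Matrix.linftyOpNormedRing Matrix.linftyOpNormedAlgebra

theorem exp_mulVec_of_mulVec_eq_smul {𝕂 : Type*} [RCLike 𝕂] {A : Matrix n n 𝕂} {v : n → 𝕂}
    {μ : 𝕂} (h : A *ᵥ v = μ • v) : exp A *ᵥ v = exp μ • v := by
  let applyTo : Matrix n n 𝕂 →L[𝕂] n → 𝕂 := LinearMap.toContinuousLinearMap
    { toFun := fun M => M *ᵥ v, map_add' := fun _ _ => add_mulVec _ _ _,
      map_smul' := fun _ _ => smul_mulVec _ _ _ }
  have hA := (exp_series_hasSum_exp' (𝕂 := 𝕂) A).mapL applyTo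
  have hμ := (exp_series_hasSum_exp' (𝕂 := 𝕂) μ).smul_const v
  refine hA.unique (hμ.congr_fun fun k => ?_)
  simp [applyTo, pow_mulVec_of_mulVec_eq_smul h, smul_smul]

theorem map_exp_ofReal (A : Matrix n n ℝ) : (exp A).map ((↑) : ℝ → ℂ) = exp (A.map (↑)) :=
  map_exp Complex.ofRealHom.mapMatrix (continuous_id.matrix_map Complex.continuous_ofReal) A

end

end Matrix

namespace AddChar

variable {G R : Type*} [AddCommGroup G] [Fintype G]

theorem vecMul_circulant [CommSemiring R] (χ : AddChar G R) (ψ : G → R) :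
    ⇑χ ᵥ* circulant ψ = (∑ k, χ k * ψ k) • ⇑χ := by
  ext j
  simp only [vecMul, dotProduct, circulant_apply, Pi.smul_apply, smul_eq_mul, Finset.sum_mul]
  refine (Fintype.sum_equiv (Equiv.addLeft j) _ _ fun k => ?_).symm
  simp [map_add_eq_mul, mul_comm, mul_left_comm]

theorem conj_sum_mul_ofReal_of_even (χ : AddChar G ℂ) {ψ : G → ℝ} (hψ : ∀ g, ψ g = ψ (-g)) :
    starRingEnd ℂ (∑ k, χ k * ψ k) = ∑ k, χ k * ψ k := by
  rw [map_sum]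
  refine Fintype.sum_equiv (Equiv.neg G) _ _ fun k => ?_
  simp [← map_neg_eq_conj, ← hψ]

end AddChar

/-- For symmetric `ψ : G → ℝ`, with `Q_{g,h} = ψ (h - g)`, `P = exp Q` and
`f g = P 0 g`, the Fourier transform `f̌(χ) = ∑ h, χ h * f h` is a nonnegative
real number (using the partial order on `ℂ`, in which `0 ≤ z` means `z` is real
and nonnegative). -/
theorem fourier_exp_circulant_nonneg
    {G : Type*} [AddCommGroup G] [Fintype G] [DecidableEq G]
    (ψ : G → ℝ) (hψ : ∀ g : G, ψ g = ψ (-g))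
    (Q : Matrix G G ℝ) (hQ : ∀ g h : G, Q g h = ψ (h - g))
    (P : Matrix G G ℝ) (hP : P = NormedSpace.exp Q)
    (f : G → ℝ) (hf : ∀ g : G, f g = P 0 g)
    (χ : AddChar G ℂ) :
    0 ≤ ∑ h : G, χ h * (f h : ℂ) := by
  obtain ⟨r, hr⟩ : ∃ r : ℝ, ∑ k, χ k * (ψ k : ℂ) = r :=
    Complex.conj_eq_iff_real.mp (χ.conj_sum_mul_ofReal_of_even hψ)
  have hQ_circulant : Q.map ((↑) : ℝ → ℂ) = (circulant fun g => (ψ g : ℂ))ᵀ := by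
    ext g h; simp [hQ]
  have h_eigen : Q.map (↑) *ᵥ ⇑χ = (r : ℂ) • ⇑χ := by
    rw [hQ_circulant, mulVec_transpose, χ.vecMul_circulant, hr]
  calc (0 : ℂ) ≤ Real.exp r := by exact_mod_cast (Real.exp_pos r).le
    _ = (P.map (↑) *ᵥ ⇑χ) 0 := by
      rw [hP, map_exp_ofReal, exp_mulVec_of_mulVec_eq_smul h_eigen, Complex.ofReal_exp,
        Complex.exp_eq_exp_ℂ]
      simp
    _ = ∑ h, χ h * (f h : ℂ) := by simp [mulVec, dotProduct, hf, mul_comm]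
end

section
/- Consider a tree with positive edge weights θ_e and path products F(i,j) = ∏_{e∈p(i,j)} θ_e. Let e be an internal edge with endpoints ν and ν', and choose leaves i, j with ν (but not ν') on the path p(i,j), and leaves i', j' with ν' (but not ν) on p(i',j'). Then (F(i,i')·F(j,j'))/(F(i,j)·F(i',j')) = θ_e². -/
/-!
Removing the edge `e = s(ν, ν')` splits the tree into a `ν`-side, containing `i, j`, and a
`ν'`-side, containing `i', j'`. Hence the path from `i` to `i'` is the path from `i` to `ν`,
then `e`, then the path from `ν'` to `i'`, and likewise for `j, j'`; the path from `i` to `j`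
is split at `ν`, and the one from `i'` to `j'` at `ν'`. Every factor of the ratio except the
two factors `θ e` of the numerator cancels.
-/

namespace SimpleGraph

variable {V : Type*} {G : SimpleGraph V}

theorem Walk.IsPath.append_cons {u v v' w : V} {p : G.Walk u v} {q : G.Walk v' w}
    (hp : p.IsPath) (hq : q.IsPath) (h : G.Adj v v') (hpq : p.support.Disjoint q.support) :
    (p.append (Walk.cons h q)).IsPath := by
  rw [Walk.isPath_def, Walk.support_append, Walk.support_cons, List.tail_cons]
  exact hp.support_nodup.append hq.support_nodup hpq

namespace IsTree

variable (hG : G.IsTree)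

noncomputable def path (a b : V) : G.Walk a b :=
  (hG.existsUnique_path a b).choose

theorem isPath_path (a b : V) : (hG.path a b).IsPath :=
  (hG.existsUnique_path a b).choose_spec.1

theorem path_eq {a b : V} {p : G.Walk a b} (hp : p.IsPath) : hG.path a b = p :=
  ((hG.existsUnique_path a b).choose_spec.2 p hp).symm

theorem path_swap (a b : V) : hG.path b a = (hG.path a b).reverse :=
  hG.path_eq (hG.isPath_path a b).reverse

theorem mem_support_path_swap {a b x : V} :
    x ∈ (hG.path b a).support ↔ x ∈ (hG.path a b).support := by
  rw [path_swap, Walk.support_reverse, List.mem_reverse]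

theorem mem_support_path_of_adj {ν ν' x : V} (hadj : G.Adj ν ν')
    (hx : ν' ∉ (hG.path x ν).support) : ν ∈ (hG.path x ν').support :=
  hG.isAcyclic.mem_support_of_ne_mem_support_of_adj_of_isPath (hG.isPath_path x ν')
    (hG.isPath_path x ν) hadj.symm hx

section Subpath

variable [DecidableEq V]

theorem path_eq_takeUntil {a b x : V} (h : x ∈ (hG.path a b).support) :
    hG.path a x = (hG.path a b).takeUntil x h :=
  hG.path_eq ((hG.isPath_path a b).takeUntil h)

theorem path_eq_dropUntil {a b x : V} (h : x ∈ (hG.path a b).support) :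
    hG.path x b = (hG.path a b).dropUntil x h :=
  hG.path_eq ((hG.isPath_path a b).dropUntil h)

theorem support_path_subset_left {a b x : V} (h : x ∈ (hG.path a b).support) :
    (hG.path x a).support ⊆ (hG.path a b).support := fun _ hy => by
  rw [mem_support_path_swap, path_eq_takeUntil hG h] at hy
  exact Walk.support_takeUntil_subset_support _ h hy

theorem support_path_subset_right {a b x : V} (h : x ∈ (hG.path a b).support) :
    (hG.path x b).support ⊆ (hG.path a b).support := by
  rw [path_eq_dropUntil hG h]
  exact Walk.support_dropUntil_subset_support _ h

theorem path_eq_append_cons_of_adj {ν ν' a a' : V} (hadj : G.Adj ν ν')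
    (ha : ν' ∉ (hG.path ν a).support) (ha' : ν ∉ (hG.path ν' a').support) :
    hG.path a a' = (hG.path ν a).reverse.append (Walk.cons hadj (hG.path ν' a')) := by
  refine hG.path_eq ((hG.isPath_path ν a).reverse.append_cons (hG.isPath_path ν' a') hadj ?_)
  intro x hxa hxa'
  rw [Walk.support_reverse, List.mem_reverse] at hxa
  have hxν : ν' ∉ (hG.path x ν).support := fun h => ha (hG.support_path_subset_left hxa h)
  exact ha' (hG.support_path_subset_left hxa' (hG.mem_support_path_of_adj hadj hxν))

end Subpath

section PathProd

variable {M : Type*} [CommMonoid M] (θ : Sym2 V → M)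

noncomputable def pathProd (a b : V) : M :=
  ((hG.path a b).edges.map θ).prod

theorem pathProd_swap (a b : V) : hG.pathProd θ b a = hG.pathProd θ a b := by
  rw [pathProd, pathProd, path_swap, Walk.edges_reverse, List.map_reverse, List.prod_reverse]

theorem pathProd_eq_mul_of_mem [DecidableEq V] {a b x : V} (h : x ∈ (hG.path a b).support) :
    hG.pathProd θ a b = hG.pathProd θ x a * hG.pathProd θ x b := by
  rw [pathProd_swap hG θ a x, pathProd, pathProd, pathProd, path_eq_takeUntil hG h,
    path_eq_dropUntil hG h, ← List.prod_append, ← List.map_append, ← Walk.edges_append,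
    Walk.take_spec]

theorem pathProd_eq_of_adj [DecidableEq V] {ν ν' a a' : V} (hadj : G.Adj ν ν')
    (ha : ν' ∉ (hG.path ν a).support) (ha' : ν ∉ (hG.path ν' a').support) :
    hG.pathProd θ a a' = hG.pathProd θ ν a * θ s(ν, ν') * hG.pathProd θ ν' a' := by
  rw [pathProd, path_eq_append_cons_of_adj hG hadj ha ha', Walk.edges_append, Walk.edges_cons,
    Walk.edges_reverse, List.map_append, List.map_cons, List.map_reverse, List.prod_append,
    List.prod_cons, List.prod_reverse, pathProd, pathProd, mul_assoc]

end PathProd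

theorem pathProd_ne_zero {M : Type*} [CommMonoidWithZero M] [Nontrivial M] [NoZeroDivisors M]
    {θ : Sym2 V → M} (hθ : ∀ e, θ e ≠ 0) (a b : V) : hG.pathProd θ a b ≠ 0 :=
  List.prod_ne_zero fun h => by
    obtain ⟨e, -, he⟩ := List.mem_map.1 h
    exact hθ e he

end IsTree

end SimpleGraph

/-- Path version of the edge-parameter identity for an internal edge under the
CFN model: if `e` is the internal edge with endpoints `ν, ν'`, with leaves `i, j`
chosen so that the path from `i` to `j` passes through `ν` but not `ν'`, and
leaves `i', j'` so that the path from `i'` to `j'` passes through `ν'` but not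
`ν`, then `(F(i,i')·F(j,j'))/(F(i,j)·F(i',j')) = θ_e²`, where `F(a,b)` is the
product of the weights along the unique path from `a` to `b`. -/
theorem path_epi_internal
    {V : Type*} (G : SimpleGraph V) (hG : G.IsTree)
    (θ : Sym2 V → ℝ) (hθ : ∀ e, 0 < θ e)
    (F : V → V → ℝ)
    (hF : ∀ v w : V, F v w =
      (((hG.existsUnique_path v w).choose.edges).map θ).prod)
    (ν ν' i j i' j' : V)
    (hadj : G.Adj ν ν')
    (hν_ij : ν ∈ (hG.existsUnique_path i j).choose.support)
    (hν'_ij : ν' ∉ (hG.existsUnique_path i j).choose.support)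
    (hν'_i'j' : ν' ∈ (hG.existsUnique_path i' j').choose.support)
    (hν_i'j' : ν ∉ (hG.existsUnique_path i' j').choose.support) :
    F i i' * F j j' / (F i j * F i' j') = θ s(ν, ν') ^ 2 := by
  classical
  have hF : ∀ a b, F a b = hG.pathProd θ a b := hF
  have hi : ν' ∉ (hG.path ν i).support := fun h => hν'_ij (hG.support_path_subset_left hν_ij h)
  have hj : ν' ∉ (hG.path ν j).support := fun h => hν'_ij (hG.support_path_subset_right hν_ij h)
  have hi' : ν ∉ (hG.path ν' i').support :=
    fun h => hν_i'j' (hG.support_path_subset_left hν'_i'j' h)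
  have hj' : ν ∉ (hG.path ν' j').support :=
    fun h => hν_i'j' (hG.support_path_subset_right hν'_i'j' h)
  have hne := hG.pathProd_ne_zero (fun e => (hθ e).ne')
  rw [hF, hF, hF, hF, hG.pathProd_eq_of_adj θ hadj hi hi', hG.pathProd_eq_of_adj θ hadj hj hj',
    hG.pathProd_eq_mul_of_mem θ hν_ij, hG.pathProd_eq_mul_of_mem θ hν'_i'j']
  field_simp [hne]
end
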